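/- arXiv:1604.06286 — 8 statements merged into one kernel-verified Lean document; each statement's English description precedes it below -/
import Mathlib

section
/- Let n ≥ 1, let A be the Cartan matrix of type A_n, and let σ be any permutation of {1,…,n}. Then the kernel of B_σ, viewed as a linear map ℚⁿ → ℚⁿ, has dimension 0 if n is even and dimension 1 if n is odd. -/
open Matrix

/-- The Cartan matrix of type `Aₙ` (nodes indexed `0, …, n-1`). -/
def cartanA (n : ℕ) : Matrix (Fin n) (Fin n) ℚ :=
  fun i j => if i = j then 2
    else if i.val + 1 = j.val ∨ j.val + 1 = i.val then -1 else 0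

/-- The acyclic exchange matrix `B_σ` attached to a Cartan matrix `A` and a permutation `σ`
(recording the order of the simple reflections in the Coxeter element):
`b i i = 0`, `b i j = -a i j` if `σ i < σ j`, and `b i j = a i j` if `σ i > σ j`. -/
def Bmat {n : ℕ} (A : Matrix (Fin n) (Fin n) ℚ) (σ : Equiv.Perm (Fin n)) :
    Matrix (Fin n) (Fin n) ℚ :=
  fun i j => if i = j then 0 else if σ i < σ j then -A i j else A i j

/-!
Since its off-diagonal entries are `± a i j`, the matrix `B_σ` of type `Aₙ` is supported exactly
on the edges of the path `0 — 1 — ⋯ — n-1`. For such a matrix the kernel equations form a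
two-term recurrence: row `k` determines `v (k+1)` from `v (k-1)`, and row `0` forces `v 1 = 0`.
Hence every odd entry of a kernel vector vanishes and the even entries are determined by `v 0`,
so the kernel has dimension at most one. Running the recurrence from the other end kills the
entries at odd distance from `n - 1`, which for even `n` are the even ones. For odd `n`, `B_σ` is
skew-symmetric of odd size, so its determinant vanishes and the kernel is nonzero.
-/

open SimpleGraph

theorem SimpleGraph.pathGraph_adj_rev {n : ℕ} {i j : Fin n} :
    (pathGraph n).Adj i.rev j.rev ↔ (pathGraph n).Adj i j := by
  simp only [pathGraph_adj, Fin.val_rev]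
  omega

namespace Matrix

theorem det_eq_zero_of_transpose_eq_neg {ι R : Type*} [Fintype ι] [DecidableEq ι] [CommRing R]
    [IsAddTorsionFree R] {M : Matrix ι ι R} (hM : Mᵀ = -M) (hι : Odd (Fintype.card ι)) :
    M.det = 0 := by
  rw [← self_eq_neg]
  calc M.det = Mᵀ.det := M.det_transpose.symm
    _ = -M.det := by rw [hM, det_neg, hι.neg_one_pow, neg_one_mul]

variable {K : Type*} [Field K] {n : ℕ}

theorem submatrix_rev_mulVec_comp_rev (M : Matrix (Fin n) (Fin n) K) (v : Fin n → K) :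
    M.submatrix Fin.rev Fin.rev *ᵥ (v ∘ Fin.rev) = (M *ᵥ v) ∘ Fin.rev := by
  rw [show (Fin.rev : Fin n → Fin n) = Fin.revPerm from rfl, submatrix_mulVec_equiv]
  simp [Function.comp_def]

def HasPathSupport (M : Matrix (Fin n) (Fin n) K) : Prop :=
  ∀ i j, M i j ≠ 0 ↔ (pathGraph n).Adj i j

namespace HasPathSupport

variable {M : Matrix (Fin n) (Fin n) K}

theorem apply_eq_zero_of_not_adj (hM : M.HasPathSupport) {i j : Fin n}
    (h : ¬(pathGraph n).Adj i j) : M i j = 0 :=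
  not_ne_iff.mp (mt (hM i j).mp h)

theorem submatrix_rev (hM : M.HasPathSupport) : (M.submatrix Fin.rev Fin.rev).HasPathSupport :=
  fun _ _ => (hM _ _).trans pathGraph_adj_rev

theorem mulVec_apply_eq_add (hM : M.HasPathSupport) (v : Fin n → K) {i j k : Fin n}
    (hij : i.val + 1 = j) (hjk : j.val + 1 = k) :
    (M *ᵥ v) j = M j i * v i + M j k * v k := by
  refine Fintype.sum_eq_add i k (Fin.ne_of_val_ne (by omega)) fun x hx => ?_
  have hjx : ¬(pathGraph n).Adj j x := by
    simp only [pathGraph_adj, ne_eq, Fin.ext_iff] at hx ⊢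
    omega
  exact mul_eq_zero_of_left (hM.apply_eq_zero_of_not_adj hjx) _

theorem mulVec_apply_eq_of_val_eq_zero (hM : M.HasPathSupport) (v : Fin n → K) {j k : Fin n}
    (hj : j.val = 0) (hk : k.val = 1) :
    (M *ᵥ v) j = M j k * v k := by
  refine Fintype.sum_eq_single k fun x hx => ?_
  have hjx : ¬(pathGraph n).Adj j x := by
    simp only [pathGraph_adj, ne_eq, Fin.ext_iff] at hx ⊢
    omega
  exact mul_eq_zero_of_left (hM.apply_eq_zero_of_not_adj hjx) _

section Kernel

variable (hM : M.HasPathSupport) {v : Fin n → K} (hv : M *ᵥ v = 0)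
include hM hv

theorem apply_eq_zero_of_val_eq_one {k : Fin n} (hk : k.val = 1) : v k = 0 := by
  have hrow := hM.mulVec_apply_eq_of_val_eq_zero v (j := ⟨0, by omega⟩) rfl hk
  rw [hv, Pi.zero_apply, eq_comm, mul_eq_zero] at hrow
  exact hrow.resolve_left ((hM _ _).mpr (pathGraph_adj.mpr (by simp [hk])))

theorem apply_eq_zero_of_val_eq_add_two {i k : Fin n} (hik : k.val = i.val + 2) (hi : v i = 0) :
    v k = 0 := by
  have hrow := hM.mulVec_apply_eq_add v (j := ⟨i.val + 1, by omega⟩) (k := k) rfl (by simp; omega)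
  rw [hv, hi, mul_zero, zero_add, Pi.zero_apply, eq_comm, mul_eq_zero] at hrow
  exact hrow.resolve_left ((hM _ _).mpr (pathGraph_adj.mpr (by simp; omega)))

theorem apply_eq_zero_of_val_eq_add_two_mul {i : Fin n} (hi : v i = 0) :
    ∀ (m : ℕ) (k : Fin n), k.val = i.val + 2 * m → v k = 0
  | 0, k, hk => by rwa [Fin.ext hk]
  | m + 1, k, hk =>
    hM.apply_eq_zero_of_val_eq_add_two hv (i := ⟨i.val + 2 * m, by omega⟩) (by simp; omega)
      (apply_eq_zero_of_val_eq_add_two_mul hi m _ rfl)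

theorem apply_eq_zero_of_odd {k : Fin n} (hk : Odd k.val) : v k = 0 := by
  obtain ⟨m, hm⟩ := hk
  exact hM.apply_eq_zero_of_val_eq_add_two_mul hv (i := ⟨1, by omega⟩)
    (hM.apply_eq_zero_of_val_eq_one hv rfl) m k (by simp; omega)

theorem eq_zero_of_apply_eq_zero {i : Fin n} (hi0 : i.val = 0) (hi : v i = 0) : v = 0 := by
  funext k
  obtain ⟨m, hm⟩ | hk := Nat.even_or_odd k.val
  · exact hM.apply_eq_zero_of_val_eq_add_two_mul hv hi m k (by omega)
  · exact hM.apply_eq_zero_of_odd hv hk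

theorem eq_zero_of_even (hn : Even n) : v = 0 := by
  funext k
  obtain ⟨m, hm⟩ | hk := Nat.even_or_odd k.val
  · have hrev : Odd k.rev.val := by
      obtain ⟨a, ha⟩ := hn
      exact ⟨a - m - 1, by rw [Fin.val_rev]; omega⟩
    have hv' : M.submatrix Fin.rev Fin.rev *ᵥ (v ∘ Fin.rev) = 0 := by
      rw [submatrix_rev_mulVec_comp_rev, hv]
      rfl
    simpa using hM.submatrix_rev.apply_eq_zero_of_odd hv' hrev
  · exact hM.apply_eq_zero_of_odd hv hk

end Kernel

theorem ker_toLin'_eq_bot_of_even (hM : M.HasPathSupport) (hn : Even n) :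
    LinearMap.ker (toLin' M) = ⊥ :=
  (Submodule.eq_bot_iff _).mpr fun _ hv =>
    hM.eq_zero_of_even (by rwa [LinearMap.mem_ker, toLin'_apply] at hv) hn

theorem finrank_ker_toLin'_le_one (hM : M.HasPathSupport) (hn : 0 < n) :
    Module.finrank K (LinearMap.ker (toLin' M)) ≤ 1 := by
  let evalZero : LinearMap.ker (toLin' M) →ₗ[K] K :=
    (LinearMap.proj ⟨0, hn⟩).comp (LinearMap.ker (toLin' M)).subtype
  have hinj : Function.Injective evalZero := (injective_iff_map_eq_zero _).mpr fun v hv =>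
    Subtype.ext (hM.eq_zero_of_apply_eq_zero
      (by simpa only [toLin'_apply] using LinearMap.mem_ker.mp v.2) rfl hv)
  simpa using LinearMap.finrank_le_finrank_of_injective hinj

theorem finrank_ker_toLin'_of_odd [CharZero K] (hM : M.HasPathSupport) (hskew : Mᵀ = -M)
    (hn : Odd n) : Module.finrank K (LinearMap.ker (toLin' M)) = 1 := by
  refine (hM.finrank_ker_toLin'_le_one hn.pos).antisymm (Submodule.one_le_finrank_iff.mpr ?_)
  obtain ⟨v, hv0, hv⟩ :=
    exists_mulVec_eq_zero_iff.mpr (det_eq_zero_of_transpose_eq_neg hskew (by simpa using hn))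
  exact fun hbot => hv0 ((Submodule.eq_bot_iff _).mp hbot v (by simpa using hv))

end HasPathSupport

end Matrix

theorem cartanA_transpose (n : ℕ) : (cartanA n)ᵀ = cartanA n := by
  ext i j
  simp only [transpose_apply, cartanA, eq_comm (a := j), or_comm]

theorem Bmat_transpose {n : ℕ} {A : Matrix (Fin n) (Fin n) ℚ} (hA : Aᵀ = A)
    (σ : Equiv.Perm (Fin n)) : (Bmat A σ)ᵀ = -Bmat A σ := by
  ext i j
  have hAij : A j i = A i j := by rw [← transpose_apply A i j, hA]
  rw [transpose_apply, neg_apply]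
  unfold Bmat
  by_cases hij : i = j
  · simp [hij]
  · rcases lt_or_gt_of_ne (σ.injective.ne hij) with h | h
    · simp [hij, Ne.symm hij, hAij, h, h.not_gt]
    · simp [hij, Ne.symm hij, hAij, h, h.not_gt]

theorem Bmat_cartanA_hasPathSupport {n : ℕ} (σ : Equiv.Perm (Fin n)) :
    (Bmat (cartanA n) σ).HasPathSupport := by
  intro i j
  rw [pathGraph_adj]
  by_cases hij : i = j
  · subst hij
    simp [Bmat]
  · simp only [Bmat, cartanA, if_neg hij]
    split_ifs <;> simp_all

theorem kernel_dim_Bmat_typeA_general (n : ℕ) (σ : Equiv.Perm (Fin n)) :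
    Module.finrank ℚ (LinearMap.ker (Matrix.toLin' (Bmat (cartanA n) σ))) =
      if Even n then 0 else 1 := by
  have hM := Bmat_cartanA_hasPathSupport σ
  split_ifs with hn
  · rw [hM.ker_toLin'_eq_bot_of_even hn, finrank_bot]
  · exact hM.finrank_ker_toLin'_of_odd (Bmat_transpose (cartanA_transpose n) σ)
      (Nat.not_even_iff_odd.mp hn)

/-- In type `Aₙ`, the kernel of any acyclic exchange matrix `B_σ` has dimension `0`
if `n` is even and `1` if `n` is odd. -/
theorem kernel_dim_Bmat_typeA (n : ℕ) (hn : 1 ≤ n) (σ : Equiv.Perm (Fin n)) :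
    Module.finrank ℚ (LinearMap.ker (Matrix.toLin' (Bmat (cartanA n) σ))) =
      if Even n then 0 else 1 :=
  kernel_dim_Bmat_typeA_general n σ
end

section
/- Let n ≥ 2, let A be the Cartan matrix of type B_n, and let σ be any permutation of {1,…,n}. Then the kernel of B_σ, viewed as a linear map ℚⁿ → ℚⁿ, has dimension 0 if n is even and dimension 1 if n is odd. -/
open Matrix

/-- The Cartan matrix of type `Bₙ` (nodes indexed `0, …, n-1`; the short root is the last
node): `a i i = 2`, consecutive nodes give `-1`, except `a (n-2) (n-1) = -2`. -/
def cartanB (n : ℕ) : Matrix (Fin n) (Fin n) ℚ :=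
  fun i j => if i = j then 2
    else if i.val + 1 = j.val then (if j.val = n - 1 then -2 else -1)
    else if j.val + 1 = i.val then -1 else 0

/-!
`B_σ` is supported exactly on the edges of the path `0 — 1 — ⋯ — n-1`, so row `k` of
`B_σ x = 0` reads `b x_{k-1} + b' x_{k+1} = 0` with `b, b' ≠ 0`: whether a coordinate of `x`
vanishes depends only on the parity of its index. Row `0` forces `x_1 = 0`, so all odd
coordinates vanish and `x` is determined by `x_0`; the kernel has dimension at most one. For `n`
even, row `n-1` forces `x_{n-2} = 0`, hence `x_0 = 0`. For `n` odd, `D B_σ` is skew-symmetric for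
the symmetrizer `D = diag(1, …, 1, 2)` of the Cartan matrix, so `det B_σ = 0`.
-/

open SimpleGraph

namespace Matrix

section CommRing

variable {ι K : Type*} [CommRing K]

def IsSymmetrizable (A : Matrix ι ι K) : Prop :=
  ∃ d : ι → K, (∀ i, d i ≠ 0) ∧ ∀ i j, d i * A i j = d j * A j i

def IsSkewSymmetrizable (B : Matrix ι ι K) : Prop :=
  ∃ d : ι → K, (∀ i, d i ≠ 0) ∧ ∀ i j, d i * B i j = -(d j * B j i)

theorem mulVec_apply_eq_sum_of_support [Fintype ι] {M : Matrix ι ι K} {x : ι → K} {i : ι}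
    {s : Finset ι} (h : ∀ j ∉ s, M i j = 0) : (M *ᵥ x) i = ∑ j ∈ s, M i j * x j :=
  (Finset.sum_subset (Finset.subset_univ s) fun j _ hj => by simp [h j hj]).symm

end CommRing

variable {ι K : Type*} [Fintype ι] [Field K]

theorem IsSkewSymmetrizable.det_eq_zero [DecidableEq ι] [CharZero K] {B : Matrix ι ι K}
    (hB : B.IsSkewSymmetrizable) (hodd : Odd (Fintype.card ι)) : B.det = 0 := by
  obtain ⟨d, hd, hskew⟩ := hB
  set S := diagonal d * B
  have hS : Sᵀ = -S := by
    ext i j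
    simp only [S, transpose_apply, diagonal_mul, neg_apply]
    exact hskew j i
  have hdetS : S.det = 0 := by
    have h := congrArg det hS
    rw [det_transpose, det_neg, hodd.neg_one_pow, neg_one_mul] at h
    exact self_eq_neg.1 h
  rw [det_mul, det_diagonal] at hdetS
  exact (mul_eq_zero.1 hdetS).resolve_left (Finset.prod_ne_zero_iff.2 fun i _ => hd i)

theorem one_le_finrank_ker_toLin' [DecidableEq ι] {M : Matrix ι ι K} (h : M.det = 0) :
    1 ≤ Module.finrank K (LinearMap.ker M.toLin') := by
  rw [Nat.one_le_iff_ne_zero, Ne, Submodule.finrank_eq_zero, ker_toLin'_eq_bot_iff]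
  obtain ⟨v, hv0, hv⟩ := exists_mulVec_eq_zero_iff.2 h
  exact fun hbot => hv0 (hbot v hv)

variable {n : ℕ}

def IsPathSupported (M : Matrix (Fin n) (Fin n) K) : Prop :=
  ∀ i j, M i j ≠ 0 ↔ (pathGraph n).Adj i j

namespace IsPathSupported

variable {M : Matrix (Fin n) (Fin n) K} {x : Fin n → K}

theorem mulVec_apply (hM : M.IsPathSupported) {i : Fin n} {s : Finset (Fin n)}
    (hs : ∀ j, (pathGraph n).Adj i j → j ∈ s) :
    (M *ᵥ x) i = ∑ j ∈ s, M i j * x j :=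
  mulVec_apply_eq_sum_of_support fun j hj => not_not.1 fun hne => hj (hs j ((hM i j).1 hne))

theorem apply_eq_zero_of_unique_adj (hM : M.IsPathSupported) (hx : M *ᵥ x = 0) {i j : Fin n}
    (hij : (pathGraph n).Adj i j)
    (hunique : ∀ l, (pathGraph n).Adj i l → l = j) : x j = 0 := by
  have hrow := congrFun hx i
  rw [hM.mulVec_apply (s := {j}) fun l hl => Finset.mem_singleton.2 (hunique l hl),
    Finset.sum_singleton, Pi.zero_apply] at hrow
  exact (mul_eq_zero.1 hrow).resolve_left ((hM i j).2 hij)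

theorem apply_one_eq_zero (hM : M.IsPathSupported) (hx : M *ᵥ x = 0) (hn : 1 < n) :
    x ⟨1, hn⟩ = 0 :=
  hM.apply_eq_zero_of_unique_adj hx (i := ⟨0, by omega⟩) (by simp [pathGraph_adj])
    fun l hl => by rw [pathGraph_adj] at hl; ext; simp only at hl ⊢; omega

theorem apply_sub_two_eq_zero (hM : M.IsPathSupported) (hx : M *ᵥ x = 0) (hn : 2 ≤ n) :
    x ⟨n - 2, by omega⟩ = 0 :=
  hM.apply_eq_zero_of_unique_adj hx (i := ⟨n - 1, by omega⟩)
    (by simp only [pathGraph_adj]; omega)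
    fun l hl => by rw [pathGraph_adj] at hl; ext; simp only at hl ⊢; omega

theorem apply_eq_zero_iff_add_two (hM : M.IsPathSupported) (hx : M *ᵥ x = 0) {k : ℕ}
    (hk : k + 2 < n) : x ⟨k, by omega⟩ = 0 ↔ x ⟨k + 2, hk⟩ = 0 := by
  have hrow := congrFun hx ⟨k + 1, by omega⟩
  rw [hM.mulVec_apply (s := {⟨k, by omega⟩, ⟨k + 2, hk⟩}) fun l hl => by
      simp only [pathGraph_adj] at hl
      simp only [Finset.mem_insert, Finset.mem_singleton, Fin.ext_iff]; omega,
    Finset.sum_pair (by simp), Pi.zero_apply] at hrow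
  have hleft : M ⟨k + 1, by omega⟩ ⟨k, by omega⟩ ≠ 0 :=
    (hM _ _).2 (by simp [pathGraph_adj])
  have hright : M ⟨k + 1, by omega⟩ ⟨k + 2, hk⟩ ≠ 0 :=
    (hM _ _).2 (by simp [pathGraph_adj])
  constructor <;> intro h <;> simp_all

theorem apply_eq_zero_iff_add_two_mul (hM : M.IsPathSupported) (hx : M *ᵥ x = 0) {k m : ℕ}
    (h : k + 2 * m < n) : x ⟨k, by omega⟩ = 0 ↔ x ⟨k + 2 * m, h⟩ = 0 := by
  induction m with
  | zero => rfl
  | succ m ih => exact (ih (by omega)).trans (hM.apply_eq_zero_iff_add_two hx (by omega))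

theorem apply_eq_zero_iff_of_mod_two_eq (hM : M.IsPathSupported) (hx : M *ᵥ x = 0)
    {i j : Fin n} (hij : i.val % 2 = j.val % 2) : x i = 0 ↔ x j = 0 := by
  wlog hle : i ≤ j generalizing i j
  · exact (this hij.symm (le_of_not_ge hle)).symm
  obtain ⟨k, hk⟩ := i
  obtain ⟨l, hl⟩ := j
  obtain ⟨m, rfl⟩ : ∃ m, l = k + 2 * m :=
    ⟨(l - k) / 2, by simp only [Fin.mk_le_mk] at hle hij; omega⟩
  exact hM.apply_eq_zero_iff_add_two_mul hx hl

theorem eq_zero_of_apply_zero (hM : M.IsPathSupported) (hx : M *ᵥ x = 0) (hn : 0 < n)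
    (hx0 : x ⟨0, hn⟩ = 0) : x = 0 := by
  funext i
  rcases Nat.mod_two_eq_zero_or_one i.val with hi | hi
  · exact (hM.apply_eq_zero_iff_of_mod_two_eq hx (j := ⟨0, hn⟩) hi).2 hx0
  · have hn1 : 1 < n := by omega
    exact (hM.apply_eq_zero_iff_of_mod_two_eq hx (j := ⟨1, hn1⟩) hi).2
      (hM.apply_one_eq_zero hx hn1)

theorem ker_toLin'_eq_bot (hM : M.IsPathSupported) (hn : Even n) :
    LinearMap.ker M.toLin' = ⊥ := by
  refine ker_toLin'_eq_bot_iff.2 fun x hx => funext fun i => ?_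
  have hn2 : 2 ≤ n := by have := i.isLt; have := Nat.even_iff.1 hn; omega
  have hx0 : x ⟨0, by omega⟩ = 0 :=
    (hM.apply_eq_zero_iff_of_mod_two_eq hx (j := ⟨n - 2, by omega⟩)
      (by simp only; have := Nat.even_iff.1 hn; omega)).2 (hM.apply_sub_two_eq_zero hx hn2)
  exact congrFun (hM.eq_zero_of_apply_zero hx (by omega) hx0) i

theorem finrank_ker_toLin'_le_one (hM : M.IsPathSupported) :
    Module.finrank K (LinearMap.ker M.toLin') ≤ 1 := by
  rcases Nat.eq_zero_or_pos n with rfl | hn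
  · exact (Submodule.finrank_le _).trans (by simp)
  refine (Module.finrank_self K).symm ▸ LinearMap.finrank_le_finrank_of_injective
    (f := (LinearMap.proj (⟨0, hn⟩ : Fin n)).comp (LinearMap.ker M.toLin').subtype) ?_
  rw [← LinearMap.ker_eq_bot, Submodule.eq_bot_iff]
  rintro ⟨x, hx⟩ hx0
  rw [LinearMap.mem_ker, toLin'_apply] at hx
  exact Subtype.ext (hM.eq_zero_of_apply_zero hx hn hx0)

end IsPathSupported

end Matrix

section ExchangeMatrix

variable {n : ℕ} {A : Matrix (Fin n) (Fin n) ℚ}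

theorem Bmat_ne_zero_iff {σ : Equiv.Perm (Fin n)} {i j : Fin n} :
    Bmat A σ i j ≠ 0 ↔ i ≠ j ∧ A i j ≠ 0 := by
  unfold Bmat
  split_ifs <;> simp_all

theorem Matrix.IsSymmetrizable.isSkewSymmetrizable_Bmat (hA : A.IsSymmetrizable)
    (σ : Equiv.Perm (Fin n)) : (Bmat A σ).IsSkewSymmetrizable := by
  obtain ⟨d, hd, hsym⟩ := hA
  refine ⟨d, hd, fun i j => ?_⟩
  rcases eq_or_ne i j with rfl | hne
  · simp [Bmat]
  rcases (σ.injective.ne hne).lt_or_gt with hlt | hlt <;>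
  · simp only [Bmat, if_neg hne, if_neg hne.symm, if_pos hlt, if_neg hlt.asymm]
    linarith [hsym i j]

end ExchangeMatrix

section CartanB

variable {n : ℕ}

theorem cartanB_ne_zero_iff {i j : Fin n} (hij : i ≠ j) :
    cartanB n i j ≠ 0 ↔ (pathGraph n).Adj i j := by
  rw [pathGraph_adj]
  simp only [cartanB, if_neg hij]
  split_ifs <;> norm_num <;> omega

theorem isPathSupported_Bmat_cartanB (σ : Equiv.Perm (Fin n)) :
    (Bmat (cartanB n) σ).IsPathSupported := fun i j => by
  rw [Bmat_ne_zero_iff]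
  by_cases hij : i = j
  · simp [hij]
  · simp [hij, cartanB_ne_zero_iff hij]

theorem cartanB_isSymmetrizable : (cartanB n).IsSymmetrizable :=
  ⟨fun i => if i.val = n - 1 then 2 else 1, fun i => by positivity, fun i j => by
    have := i.isLt
    have := j.isLt
    simp only [cartanB, Fin.ext_iff]
    split_ifs <;> first | omega | norm_num⟩

end CartanB

theorem kernel_dim_Bmat_typeB_general (n : ℕ) (σ : Equiv.Perm (Fin n)) :
    Module.finrank ℚ (LinearMap.ker (Matrix.toLin' (Bmat (cartanB n) σ))) =
      if Even n then 0 else 1 := by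
  have hB := isPathSupported_Bmat_cartanB σ
  split_ifs with hn
  · rw [hB.ker_toLin'_eq_bot hn, finrank_bot]
  · refine le_antisymm hB.finrank_ker_toLin'_le_one (one_le_finrank_ker_toLin' ?_)
    exact (cartanB_isSymmetrizable.isSkewSymmetrizable_Bmat σ).det_eq_zero
      (by simpa [Nat.not_even_iff_odd] using hn)

/-- In type `Bₙ`, the kernel of any acyclic exchange matrix `B_σ` has dimension `0`
if `n` is even and `1` if `n` is odd. -/
theorem kernel_dim_Bmat_typeB (n : ℕ) (hn : 2 ≤ n) (σ : Equiv.Perm (Fin n)) :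
    Module.finrank ℚ (LinearMap.ker (Matrix.toLin' (Bmat (cartanB n) σ))) =
      if Even n then 0 else 1 :=
  kernel_dim_Bmat_typeB_general n σ
end

section
/- Let n ≥ 4, let A be the Cartan matrix of type D_n, and let σ be any permutation of {1,…,n}. Then the kernel of B_σ, viewed as a linear map ℚⁿ → ℚⁿ, has dimension 2 if n is even and dimension 1 if n is odd. -/
open Matrix

/-- The Cartan matrix of type `Dₙ` (nodes indexed `0, …, n-1`; the Dynkin diagram has
edges `{i, i+1}` for `i + 1 ≤ n - 2` and the edge `{n-3, n-1}`). -/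
def cartanD (n : ℕ) : Matrix (Fin n) (Fin n) ℚ :=
  fun i j => if i = j then 2
    else if (i.val + 1 = j.val ∧ j.val ≤ n - 2) ∨ (j.val + 1 = i.val ∧ i.val ≤ n - 2) ∨
      (i.val = n - 3 ∧ j.val = n - 1) ∨ (i.val = n - 1 ∧ j.val = n - 3) then -1 else 0

/-!
The Dynkin diagram of `Dₙ` is a tree, so the sign pattern by which two orientations `σ`, `τ`
differ is a coboundary: there are signs `εᵢ = ±1` with `B_σ = diag ε * B_τ * diag ε`. Hence
every `B_σ` has the kernel dimension of the orientation `σ = 1`, where the kernel equations read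
`x₁ = 0`, `x_{k+1} = x_{k-1}` along the long arm, `x_{n-3} = 0` and
`x_{n-4} = x_{n-2} + x_{n-1}`. The kernel is spanned by the fork vector `e_{n-1} - e_{n-2}`
and, only when `n` is even (for odd `n` the condition `x_{n-3} = 0` propagates back to
`x₀ = 0`), by the indicator of the even nodes of the long arm.
-/

open Finset

theorem finrank_ker_toLin'_mul_mul {K m : Type*} [Field K] [Fintype m] [DecidableEq m]
    {P Q : Matrix m m K} (B : Matrix m m K) (hP : P.det ≠ 0) (hQ : Q.det ≠ 0) :
    Module.finrank K (LinearMap.ker (toLin' (P * B * Q))) =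
      Module.finrank K (LinearMap.ker (toLin' B)) := by
  have hrank : Module.finrank K (LinearMap.range (toLin' (P * B * Q))) =
      Module.finrank K (LinearMap.range (toLin' B)) := by
    change (P * B * Q).rank = B.rank
    rw [rank_mul_eq_left_of_det_ne_zero _ _ hQ, rank_mul_eq_right_of_det_ne_zero _ _ hP]
  have h₁ := LinearMap.finrank_range_add_finrank_ker (toLin' (P * B * Q))
  have h₂ := LinearMap.finrank_range_add_finrank_ker (toLin' B)
  omega

section Orientation

variable {n : ℕ}

def orientSign (σ : Equiv.Perm (Fin n)) (i j : Fin n) : ℚ := if σ i < σ j then -1 else 1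

theorem orientSign_mul_self (σ : Equiv.Perm (Fin n)) (i j : Fin n) :
    orientSign σ i j * orientSign σ i j = 1 := by
  unfold orientSign; split_ifs <;> norm_num

theorem orientSign_swap (σ : Equiv.Perm (Fin n)) {i j : Fin n} (hij : i ≠ j) :
    orientSign σ j i = -orientSign σ i j := by
  have : σ i ≠ σ j := σ.injective.ne hij
  unfold orientSign
  split_ifs <;> first | (exfalso; order) | norm_num

theorem orientSign_mul_orientSign_comm (σ τ : Equiv.Perm (Fin n)) (i j : Fin n) :
    orientSign σ i j * orientSign τ i j = orientSign σ j i * orientSign τ j i := by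
  rcases eq_or_ne i j with rfl | hij
  · rfl
  · rw [orientSign_swap σ hij, orientSign_swap τ hij, neg_mul_neg]

theorem Bmat_apply_of_ne (A : Matrix (Fin n) (Fin n) ℚ) (σ : Equiv.Perm (Fin n)) {i j : Fin n}
    (hij : i ≠ j) : Bmat A σ i j = orientSign σ i j * A i j := by
  simp only [Bmat, orientSign, if_neg hij]
  split_ifs <;> ring

theorem Bmat_eq_diagonal_mul_mul_diagonal {A : Matrix (Fin n) (Fin n) ℚ}
    {σ τ : Equiv.Perm (Fin n)} {ε : Fin n → ℚ}
    (hε : ∀ i j, i ≠ j → A i j ≠ 0 →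
      ε i * ε j = orientSign σ i j * orientSign τ i j) :
    Bmat A σ = diagonal ε * Bmat A τ * diagonal ε := by
  ext i j
  rw [mul_diagonal, diagonal_mul]
  by_cases hij : i = j
  · simp [Bmat, hij]
  rw [Bmat_apply_of_ne _ _ hij, Bmat_apply_of_ne _ _ hij]
  by_cases hA : A i j = 0
  · simp [hA]
  linear_combination -(orientSign τ i j * A i j) * hε i j hij hA -
    orientSign σ i j * A i j * orientSign_mul_self τ i j

end Orientation

/-- Makes `x (i - 1)` and `x (i + 1)` meaningful without bound proofs. -/
def extendByZero {α : Type*} [Zero α] {n : ℕ} (x : Fin n → α) (m : ℕ) : α :=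
  if h : m < n then x ⟨m, h⟩ else 0

theorem extendByZero_val {α : Type*} [Zero α] {n : ℕ} (x : Fin n → α) (i : Fin n) :
    extendByZero x i = x i :=
  dif_pos i.isLt

theorem sum_ite_and_val_eq {M : Type*} [AddCommMonoid M] {n : ℕ} (x : Fin n → M) (P : Prop)
    [Decidable P] (m : ℕ) :
    ∑ j : Fin n, (if P ∧ (j : ℕ) = m then x j else 0) =
      if P then extendByZero x m else 0 := by
  by_cases hP : P
  · simp only [hP, true_and, if_true, extendByZero]
    split_ifs with hm
    · rw [Fintype.sum_eq_single ⟨m, hm⟩ fun j hj => if_neg fun h => hj (Fin.ext h)]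
      simp
    · exact sum_eq_zero fun j _ => if_neg (by omega)
  · simp [hP]

namespace CartanD

variable {n : ℕ}

theorem adj_of_ne_zero {i j : Fin n} (hij : i ≠ j) (h : cartanD n i j ≠ 0) :
    (i.val + 1 = j.val ∧ j.val ≤ n - 2) ∨ (j.val + 1 = i.val ∧ i.val ≤ n - 2) ∨
      (i.val = n - 3 ∧ j.val = n - 1) ∨ (i.val = n - 1 ∧ j.val = n - 3) := by
  by_contra hedge
  exact h (by rw [cartanD, if_neg hij, if_neg hedge])

theorem exists_sign_potential (t : Fin n → Fin n → ℚ) (ht : ∀ i j, t i j * t i j = 1)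
    (ht_symm : ∀ i j, t i j = t j i) :
    ∃ ε : Fin n → ℚ, (∀ i, ε i ≠ 0) ∧
      ∀ i j, i ≠ j → cartanD n i j ≠ 0 → ε i * ε j = t i j := by
  -- `ε i` is the product of the edge signs along the path from node `0` to `i`;
  -- node `n - 1` hangs off node `n - 3`.
  let step : ℕ → ℚ := fun k => if h : k + 1 < n then t ⟨k, by omega⟩ ⟨k + 1, h⟩ else 1
  let path : ℕ → ℚ := fun k => ∏ l ∈ range k, step l
  have hpath : ∀ k, path k * path k = 1 := fun k => by
    rw [← prod_mul_distrib]
    refine prod_eq_one fun l _ => ?_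
    simp only [step]
    split_ifs
    exacts [ht _ _, one_mul 1]
  let leaf : Fin n → ℚ := fun i => t ⟨n - 3, Nat.sub_lt i.pos three_pos⟩ i
  let ε : Fin n → ℚ := fun i => if i.val = n - 1 then path (n - 3) * leaf i else path i
  have hε : ∀ i, ε i * ε i = 1 := fun i => by
    simp only [ε]
    split_ifs
    · linear_combination (leaf i * leaf i) * hpath (n - 3) + ht _ _
    · exact hpath _
  have hforward : ∀ i j : Fin n, i ≠ j → (i.val + 1 = j.val ∧ j.val ≤ n - 2) ∨
      (i.val = n - 3 ∧ j.val = n - 1) → ε i * ε j = t i j := by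
    rintro i j hij (⟨hsucc, hj⟩ | ⟨hi, hj⟩)
    · have hstep : step i = t i j := by
        simp only [step, dif_pos (show i.val + 1 < n by omega)]
        congr 1; ext; exact hsucc
      simp only [ε, if_neg (show i.val ≠ n - 1 by omega), if_neg (show j.val ≠ n - 1 by omega),
        ← hsucc, path, prod_range_succ]
      linear_combination step i * hpath i + hstep
    · have := Fin.val_ne_iff.mpr hij
      have hleaf : leaf j = t i j := by
        simp only [leaf]
        congr 1; ext; exact hi.symm
      simp only [ε, if_neg (show i.val ≠ n - 1 by omega), if_pos hj, hi]
      linear_combination leaf j * hpath (n - 3) + hleaf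
  refine ⟨ε, fun i h => by simpa [h] using hε i, fun i j hij hA => ?_⟩
  rcases adj_of_ne_zero hij hA with h | h | h | h
  · exact hforward i j hij (.inl h)
  · rw [mul_comm, ht_symm]; exact hforward j i hij.symm (.inl h)
  · exact hforward i j hij (.inr h)
  · rw [mul_comm, ht_symm]; exact hforward j i hij.symm (.inr ⟨h.2, h.1⟩)

theorem mulVec_Bmat_one_apply (x : Fin n → ℚ) (i : Fin n) :
    (Bmat (cartanD n) 1 *ᵥ x) i =
      (if i.val + 1 ≤ n - 2 then extendByZero x (i + 1) else 0) -
        (if 1 ≤ i.val ∧ i.val ≤ n - 2 then extendByZero x (i - 1) else 0) +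
        (if i.val = n - 3 then extendByZero x (n - 1) else 0) -
        (if i.val = n - 1 then extendByZero x (n - 3) else 0) := by
  simp only [← sum_ite_and_val_eq, ← sum_sub_distrib, ← sum_add_distrib, mulVec, dotProduct]
  refine sum_congr rfl fun j _ => ?_
  have := i.isLt
  have := j.isLt
  simp only [Bmat, cartanD, Equiv.Perm.coe_one, id_eq, Fin.lt_def, Fin.ext_iff]
  split_ifs <;> first | (exfalso; omega) | ring

section Kernel

variable {x : Fin n → ℚ}

local notation "X" => extendByZero x

theorem row_eq_zero_of_mulVec_eq_zero (hx : Bmat (cartanD n) 1 *ᵥ x = 0) {k : ℕ} (hk : k < n) :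
    (if k + 1 ≤ n - 2 then X (k + 1) else 0) -
        (if 1 ≤ k ∧ k ≤ n - 2 then X (k - 1) else 0) +
        (if k = n - 3 then X (n - 1) else 0) -
        (if k = n - 1 then X (n - 3) else 0) = 0 :=
  (mulVec_Bmat_one_apply x ⟨k, hk⟩).symm.trans (congrFun hx _)

theorem extendByZero_eq_of_mulVec_eq_zero (hn : 4 ≤ n) (hx : Bmat (cartanD n) 1 *ᵥ x = 0) :
    ∀ k ≤ n - 3, X k = if Even k then X 0 else 0
  | 0, _ => by simp
  | 1, _ => by
    have h := row_eq_zero_of_mulVec_eq_zero hx (k := 0) (by omega)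
    simp (disch := omega) only [if_pos, if_neg] at h
    simpa using h
  | k + 2, hk => by
    have h := row_eq_zero_of_mulVec_eq_zero hx (k := k + 1) (by omega)
    simp (disch := omega) only [if_pos, if_neg] at h
    have hparity : Even (k + 2) ↔ Even k := by simp [Nat.even_add]
    simp only [hparity, ← extendByZero_eq_of_mulVec_eq_zero hn hx k (by omega)]
    simpa [sub_eq_zero] using h

theorem fork_rows_of_mulVec_eq_zero (hn : 4 ≤ n) (hx : Bmat (cartanD n) 1 *ᵥ x = 0) :
    X (n - 2) + X (n - 1) = X (n - 4) ∧ X (n - 3) = 0 := by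
  have hbranch := row_eq_zero_of_mulVec_eq_zero hx (k := n - 3) (by omega)
  have hleaf := row_eq_zero_of_mulVec_eq_zero hx (k := n - 2) (by omega)
  rw [show n - 3 + 1 = n - 2 by omega, show n - 3 - 1 = n - 4 by omega] at hbranch
  rw [show n - 2 - 1 = n - 3 by omega] at hleaf
  simp (disch := omega) only [if_pos, if_neg, if_true] at hbranch hleaf
  constructor <;> linarith

end Kernel

def alternatingVec (n : ℕ) : Fin n → ℚ := fun i =>
  if Even i.val ∧ i.val ≤ n - 2 then 1 else 0

def forkVec (n : ℕ) : Fin n → ℚ := fun i =>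
  if i.val = n - 1 then 1 else if i.val = n - 2 then -1 else 0

theorem eq_smul_add_smul_of_mulVec_eq_zero (hn : 4 ≤ n) {x : Fin n → ℚ}
    (hx : Bmat (cartanD n) 1 *ᵥ x = 0) :
    x = extendByZero x 0 • alternatingVec n + extendByZero x (n - 1) • forkVec n := by
  have hpath := extendByZero_eq_of_mulVec_eq_zero hn hx
  obtain ⟨hfork, -⟩ := fork_rows_of_mulVec_eq_zero hn hx
  funext i
  rw [Pi.add_apply, Pi.smul_apply, Pi.smul_apply, smul_eq_mul, smul_eq_mul,
    ← extendByZero_val x i, alternatingVec, forkVec]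
  rcases (show i.val ≤ n - 3 ∨ i.val = n - 2 ∨ i.val = n - 1 by omega) with hi | hi | hi
  · rw [hpath _ hi]
    simp (disch := omega) only [if_neg, Nat.even_iff]
    split_ifs <;> first | (exfalso; omega) | ring
  · rw [hi, eq_sub_of_add_eq hfork, hpath (n - 4) (by omega)]
    simp (disch := omega) only [if_neg, Nat.even_iff]
    split_ifs <;> first | (exfalso; omega) | ring
  · simp (disch := omega) only [if_neg, if_true, hi]
    ring

theorem extendByZero_zero_of_mulVec_eq_zero_of_odd (hn : 4 ≤ n) (hodd : Odd n) {x : Fin n → ℚ}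
    (hx : Bmat (cartanD n) 1 *ᵥ x = 0) : extendByZero x 0 = 0 := by
  have h := extendByZero_eq_of_mulVec_eq_zero hn hx (n - 3) le_rfl
  rw [(fork_rows_of_mulVec_eq_zero hn hx).2, if_pos] at h
  · exact h.symm
  · obtain ⟨k, rfl⟩ := hodd
    exact ⟨k - 1, by omega⟩

theorem extendByZero_forkVec (hn : 2 ≤ n) (m : ℕ) :
    extendByZero (forkVec n) m = if m = n - 1 then 1 else if m = n - 2 then -1 else 0 := by
  unfold extendByZero forkVec
  split_ifs <;> first | rfl | (exfalso; omega)

theorem extendByZero_alternatingVec (hn : 0 < n) (m : ℕ) :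
    extendByZero (alternatingVec n) m = if Even m ∧ m ≤ n - 2 then 1 else 0 := by
  unfold extendByZero alternatingVec
  split_ifs <;> first | rfl | (exfalso; omega)

theorem mulVec_forkVec (hn : 3 ≤ n) : Bmat (cartanD n) 1 *ᵥ forkVec n = 0 := by
  funext i
  rw [mulVec_Bmat_one_apply, Pi.zero_apply]
  simp only [extendByZero_forkVec (by omega : 2 ≤ n)]
  split_ifs <;> first | (exfalso; omega) | norm_num

theorem mulVec_alternatingVec (hn : 4 ≤ n) (heven : Even n) :
    Bmat (cartanD n) 1 *ᵥ alternatingVec n = 0 := by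
  funext i
  rw [mulVec_Bmat_one_apply, Pi.zero_apply]
  simp only [extendByZero_alternatingVec (by omega : 0 < n), Nat.even_iff] at heven ⊢
  split_ifs <;> first | (exfalso; omega) | norm_num

theorem mem_ker_Bmat_one_iff {x : Fin n → ℚ} :
    x ∈ LinearMap.ker (toLin' (Bmat (cartanD n) 1)) ↔ Bmat (cartanD n) 1 *ᵥ x = 0 := by
  rw [LinearMap.mem_ker, toLin'_apply]

theorem ker_Bmat_one_of_even (hn : 4 ≤ n) (heven : Even n) :
    LinearMap.ker (toLin' (Bmat (cartanD n) 1)) =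
      Submodule.span ℚ (Set.range ![alternatingVec n, forkVec n]) := by
  refine le_antisymm (fun x hx => ?_) (Submodule.span_le.mpr ?_)
  · rw [eq_smul_add_smul_of_mulVec_eq_zero hn (mem_ker_Bmat_one_iff.mp hx)]
    exact add_mem (Submodule.smul_mem _ _ (Submodule.subset_span ⟨0, rfl⟩))
      (Submodule.smul_mem _ _ (Submodule.subset_span ⟨1, rfl⟩))
  · rintro _ ⟨k, rfl⟩
    fin_cases k
    exacts [mem_ker_Bmat_one_iff.mpr (mulVec_alternatingVec hn heven),
      mem_ker_Bmat_one_iff.mpr (mulVec_forkVec (by omega))]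

theorem ker_Bmat_one_of_odd (hn : 4 ≤ n) (hodd : Odd n) :
    LinearMap.ker (toLin' (Bmat (cartanD n) 1)) = Submodule.span ℚ {forkVec n} := by
  refine le_antisymm (fun x hx => ?_) (Submodule.span_le.mpr ?_)
  · rw [mem_ker_Bmat_one_iff] at hx
    rw [eq_smul_add_smul_of_mulVec_eq_zero hn hx,
      extendByZero_zero_of_mulVec_eq_zero_of_odd hn hodd hx, zero_smul, zero_add]
    exact Submodule.smul_mem _ _ (Submodule.mem_span_singleton_self _)
  · rintro _ rfl
    exact mem_ker_Bmat_one_iff.mpr (mulVec_forkVec (by omega))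

theorem linearIndependent_alternatingVec_forkVec (hn : 3 ≤ n) :
    LinearIndependent ℚ ![alternatingVec n, forkVec n] := by
  refine LinearIndependent.pair_iff.mpr fun s t hst => ?_
  have h₀ := congrFun hst ⟨0, by omega⟩
  have h₁ := congrFun hst ⟨n - 1, by omega⟩
  simp (disch := omega) only [Pi.add_apply, Pi.smul_apply, Pi.zero_apply, smul_eq_mul,
    alternatingVec, forkVec, Nat.even_iff, true_and, if_pos, if_neg, if_true] at h₀ h₁
  constructor <;> linarith

theorem finrank_ker_Bmat_one (hn : 4 ≤ n) :
    Module.finrank ℚ (LinearMap.ker (toLin' (Bmat (cartanD n) 1))) = if Even n then 2 else 1 := by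
  split_ifs with heven
  · rw [ker_Bmat_one_of_even hn heven,
      finrank_span_eq_card (linearIndependent_alternatingVec_forkVec (by omega)), Fintype.card_fin]
  · have hfork : forkVec n ≠ 0 := fun h => by
      simpa [forkVec] using congrFun h ⟨n - 1, by omega⟩
    rw [ker_Bmat_one_of_odd hn (Nat.not_even_iff_odd.mp heven), finrank_span_singleton hfork]

end CartanD

/-- In type `Dₙ` (`n ≥ 4`), the kernel of any acyclic exchange matrix `B_σ` has dimension
`2` if `n` is even and `1` if `n` is odd. -/
theorem kernel_dim_Bmat_typeD (n : ℕ) (hn : 4 ≤ n) (σ : Equiv.Perm (Fin n)) :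
    Module.finrank ℚ (LinearMap.ker (Matrix.toLin' (Bmat (cartanD n) σ))) =
      if Even n then 2 else 1 := by
  obtain ⟨ε, hε_ne, hε⟩ := CartanD.exists_sign_potential
    (fun i j => orientSign σ i j * orientSign 1 i j)
    (fun i j => by
      linear_combination orientSign 1 i j * orientSign 1 i j * orientSign_mul_self σ i j +
        orientSign_mul_self 1 i j)
    (orientSign_mul_orientSign_comm σ 1)
  have hdet : (diagonal ε).det ≠ 0 := by
    rw [det_diagonal, prod_ne_zero_iff]
    exact fun i _ => hε_ne i
  rw [Bmat_eq_diagonal_mul_mul_diagonal hε, finrank_ker_toLin'_mul_mul _ hdet hdet,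
    CartanD.finrank_ker_Bmat_one hn]
end

section
/- Let A be the standard Cartan matrix of type E₆, E₈, F₄, or G₂ (of size n = 6, 8, 4, 2 respectively), and let σ be any permutation of {1,…,n}. Then B_σ is invertible over ℚ (equivalently, det B_σ ≠ 0). -/
/-!
Reduce modulo 2: the signs that distinguish `B_σ` from the Cartan matrix `A` disappear, and so
does the diagonal of `A`, which consists of `2`s. Hence `det B_σ ≡ det A (mod 2)`, and it
suffices that `A` is invertible over `ZMod 2`, which is checked by exhibiting an inverse.
-/

open Matrix

section ExchangeMatrix

variable {R S : Type*} {n : ℕ}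

/-- `Bmat` over an arbitrary ring, so that it can be reduced modulo 2. -/
def exchangeMatrix [Zero R] [Neg R] (A : Matrix (Fin n) (Fin n) R) (σ : Equiv.Perm (Fin n)) :
    Matrix (Fin n) (Fin n) R :=
  fun i j => if i = j then 0 else if σ i < σ j then -A i j else A i j

theorem exchangeMatrix_map [Ring R] [Ring S] (f : R →+* S) (A : Matrix (Fin n) (Fin n) R)
    (σ : Equiv.Perm (Fin n)) : (exchangeMatrix A σ).map f = exchangeMatrix (A.map f) σ := by
  ext i j
  simp only [exchangeMatrix, map_apply]
  split_ifs <;> simp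

theorem exchangeMatrix_eq_self_of_charTwo [Ring R] [CharP R 2] (A : Matrix (Fin n) (Fin n) R)
    (hA : ∀ i, A i i = 0) (σ : Equiv.Perm (Fin n)) : exchangeMatrix A σ = A := by
  ext i j
  simp only [exchangeMatrix, CharTwo.neg_eq, ite_self]
  split_ifs with h
  · rw [h, hA]
  · rfl

theorem det_exchangeMatrix_ne_zero (A : Matrix (Fin n) (Fin n) ℤ) (hA : ∀ i, Even (A i i))
    (hA₂ : (A.map ((↑) : ℤ → ZMod 2)).det ≠ 0) (σ : Equiv.Perm (Fin n)) :
    (exchangeMatrix A σ).det ≠ 0 := by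
  have hmod : (exchangeMatrix A σ).map ((↑) : ℤ → ZMod 2) = A.map (↑) :=
    (exchangeMatrix_map (Int.castRingHom (ZMod 2)) A σ).trans <|
      exchangeMatrix_eq_self_of_charTwo _ (fun i => ZMod.intCast_eq_zero_iff_even.mpr (hA i)) σ
  intro h
  rw [← hmod, ← Int.cast_det, h, Int.cast_zero] at hA₂
  exact hA₂ rfl

theorem det_Bmat_intCast_ne_zero (A : Matrix (Fin n) (Fin n) ℤ) (hA : ∀ i, Even (A i i))
    (hA₂ : (A.map ((↑) : ℤ → ZMod 2)).det ≠ 0) (σ : Equiv.Perm (Fin n)) :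
    (Bmat (A.map ((↑) : ℤ → ℚ)) σ).det ≠ 0 := by
  have hcast : Bmat (A.map ((↑) : ℤ → ℚ)) σ = (exchangeMatrix A σ).map (↑) :=
    (exchangeMatrix_map (Int.castRingHom ℚ) A σ).symm
  rw [hcast, ← Int.cast_det, Int.cast_ne_zero]
  exact det_exchangeMatrix_ne_zero A hA hA₂ σ

end ExchangeMatrix

namespace CartanMatrix

theorem E₆_map_zmod_two_det_ne_zero : (E₆.map ((↑) : ℤ → ZMod 2)).det ≠ 0 :=
  det_ne_zero_of_right_inverse (B := !![0,1,1,0,0,0; 1,0,0,1,0,1; 1,0,0,0,0,0;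
    0,1,0,0,0,0; 0,0,0,0,0,1; 0,1,0,0,1,0]) (by decide)

theorem E₈_map_zmod_two_det_ne_zero : (E₈.map ((↑) : ℤ → ZMod 2)).det ≠ 0 :=
  det_ne_zero_of_right_inverse (B := !![0,1,1,0,0,0,0,0; 1,0,0,1,0,1,0,1; 1,0,0,0,0,0,0,0;
    0,1,0,0,0,0,0,0; 0,0,0,0,0,1,0,1; 0,1,0,0,1,0,0,0; 0,0,0,0,0,0,0,1; 0,1,0,0,1,0,1,0])
    (by decide)

theorem F₄_map_zmod_two_det_ne_zero : (F₄.map ((↑) : ℤ → ZMod 2)).det ≠ 0 :=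
  det_ne_zero_of_right_inverse (B := !![0,1,0,0; 1,0,0,0; 0,0,0,1; 1,0,1,0]) (by decide)

theorem G₂_map_zmod_two_det_ne_zero : (G₂.map ((↑) : ℤ → ZMod 2)).det ≠ 0 :=
  det_ne_zero_of_right_inverse (B := !![0,1; 1,0]) (by decide)

end CartanMatrix

/-- For the Cartan matrices of types `E₆`, `E₈`, `F₄` and `G₂`, every acyclic exchange
matrix `B_σ` is invertible over `ℚ`, i.e., has nonzero determinant. -/
theorem Bmat_det_ne_zero_E6_E8_F4_G2 :
    (∀ σ : Equiv.Perm (Fin 6),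
      (Bmat (CartanMatrix.E₆.map ((↑) : ℤ → ℚ)) σ).det ≠ 0) ∧
    (∀ σ : Equiv.Perm (Fin 8),
      (Bmat (CartanMatrix.E₈.map ((↑) : ℤ → ℚ)) σ).det ≠ 0) ∧
    (∀ σ : Equiv.Perm (Fin 4),
      (Bmat (CartanMatrix.F₄.map ((↑) : ℤ → ℚ)) σ).det ≠ 0) ∧
    (∀ σ : Equiv.Perm (Fin 2),
      (Bmat (CartanMatrix.G₂.map ((↑) : ℤ → ℚ)) σ).det ≠ 0) :=
  ⟨det_Bmat_intCast_ne_zero _ (by simp) CartanMatrix.E₆_map_zmod_two_det_ne_zero,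
    det_Bmat_intCast_ne_zero _ (by simp) CartanMatrix.E₈_map_zmod_two_det_ne_zero,
    det_Bmat_intCast_ne_zero _ (by simp) CartanMatrix.F₄_map_zmod_two_det_ne_zero,
    det_Bmat_intCast_ne_zero _ (by simp) CartanMatrix.G₂_map_zmod_two_det_ne_zero⟩
end

section
/- Let n = 2k+1 be odd with n ≥ 3, let A be the Cartan matrix of type B_n, and let σ be any permutation of {1,…,n}. Then the kernel of B_σ over ℚ is spanned by a single nonzero vector v whose support {i : v_i ≠ 0} is exactly the set of odd indices {1, 3, …, n}; in particular the support of v has exactly k+1 connected components in the Dynkin diagram of type B_n (a path on {1,…,n}). -/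
/-!
`B_σ` has the zero pattern of the path graph: zero diagonal, nonzero entries exactly at adjacent
nodes. Such a matrix links only nodes of opposite parity, so it anticommutes with
`diag((-1)^i)`; for `n` odd this forces `det B_σ = 0`. In row `i + 1` of `B w = 0` only `w i` and
`w (i + 2)` occur, both with nonzero coefficients, so `w i = 0 ↔ w (i + 2) = 0`, while row `0`
forces `w 1 = 0`. Hence every kernel vector vanishes on the odd nodes and is determined by `w 0`:
the kernel is a line spanned by a vector supported exactly on the even nodes, which are pairwise
non-adjacent.
-/

open Matrix

theorem SimpleGraph.card_connectedComponent_bot (V : Type*) :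
    Nat.card (⊥ : SimpleGraph V).ConnectedComponent = Nat.card V :=
  (Nat.card_eq_of_bijective _ ⟨fun _ _ h => reachable_bot.1 (ConnectedComponent.exact h),
    ConnectedComponent.ind fun v => ⟨v, rfl⟩⟩).symm

theorem SimpleGraph.pathGraph_induce_even_eq_bot (n : ℕ) :
    (pathGraph n).induce {i : Fin n | i.val % 2 = 0} = ⊥ := by
  ext ⟨a, ha⟩ ⟨b, hb⟩
  simp only [Set.mem_ofPred_eq] at ha hb
  simp only [comap_adj, Function.Embedding.coe_subtype, pathGraph_adj, bot_adj, iff_false]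
  omega

theorem Fin.card_setOf_val_mod_two_eq_zero (k : ℕ) :
    Nat.card {i : Fin (2 * k + 1) | i.val % 2 = 0} = k + 1 := by
  rw [← Nat.card_fin (k + 1)]
  refine (Nat.card_eq_of_bijective (fun m => ⟨⟨2 * m.val, by omega⟩, by simp⟩) ⟨?_, ?_⟩).symm
  · intro a b h
    simp only [Subtype.mk.injEq, Fin.mk.injEq] at h
    exact Fin.ext (by omega)
  · rintro ⟨i, hi⟩
    simp only [Set.mem_ofPred_eq] at hi
    exact ⟨⟨i.val / 2, by omega⟩, Subtype.ext (Fin.ext (by simp; omega))⟩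

def Matrix.HasPathSupport_s8 {K : Type*} [Zero K] {n : ℕ} (B : Matrix (Fin n) (Fin n) K) : Prop :=
  ∀ i j, B i j ≠ 0 ↔ (SimpleGraph.pathGraph n).Adj i j

namespace Matrix.HasPathSupport_s8

variable {K : Type*} [Field K] {n : ℕ} {B : Matrix (Fin n) (Fin n) K} {w : Fin n → K}

theorem apply_eq_zero (hB : B.HasPathSupport_s8) {i j : Fin n}
    (h : ¬(SimpleGraph.pathGraph n).Adj i j) : B i j = 0 :=
  not_not.1 ((hB i j).not.2 h)

theorem diagonal_neg_one_pow_mul_mul_diagonal_neg_one_pow (hB : B.HasPathSupport_s8) :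
    diagonal (fun i : Fin n => (-1 : K) ^ i.val) * B * diagonal (fun i => (-1) ^ i.val) = -B := by
  ext i j
  rw [mul_diagonal, diagonal_mul, neg_apply]
  by_cases hij : (SimpleGraph.pathGraph n).Adj i j
  · have hodd : Odd (i.val + j.val) := by
      rw [SimpleGraph.pathGraph_adj] at hij
      exact ⟨min i.val j.val, by omega⟩
    calc (-1) ^ i.val * B i j * (-1) ^ j.val = (-1) ^ (i.val + j.val) * B i j := by ring
      _ = -B i j := by rw [hodd.neg_one_pow, neg_one_mul]
  · simp [hB.apply_eq_zero hij]

theorem det_eq_zero [NeZero (2 : K)] (hB : B.HasPathSupport_s8) (hn : Odd n) : B.det = 0 := by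
  have hconj := congrArg det hB.diagonal_neg_one_pow_mul_mul_diagonal_neg_one_pow
  set S := diagonal (fun i : Fin n => (-1 : K) ^ i.val)
  have hS : S.det * S.det = 1 := by
    rw [← det_mul, diagonal_mul_diagonal]
    simp [← mul_pow]
  rw [det_mul, det_mul, det_neg, Fintype.card_fin, hn.neg_one_pow] at hconj
  have h2 : (2 : K) * B.det = 0 := by linear_combination hconj - B.det * hS
  exact (mul_eq_zero.1 h2).resolve_left two_ne_zero

theorem mulVec_apply_eq_add_s8 (hB : B.HasPathSupport_s8) (w : Fin n → K) {i j m : Fin n} (hij : i ≠ j)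
    (hm : ∀ l, (SimpleGraph.pathGraph n).Adj m l → l = i ∨ l = j) :
    (B *ᵥ w) m = B m i * w i + B m j * w j :=
  Fintype.sum_eq_add i j hij fun l hl => by
    show B m l * w l = 0
    rw [hB.apply_eq_zero fun hadj => (hm l hadj).elim hl.1 hl.2, zero_mul]

theorem apply_eq_zero_iff_of_mulVec_eq_zero (hB : B.HasPathSupport_s8) (hw : B *ᵥ w = 0)
    {i j : Fin n} (hij : i.val + 2 = j.val) : w i = 0 ↔ w j = 0 := by
  let m : Fin n := ⟨i.val + 1, by omega⟩
  have hrow : B m i * w i + B m j * w j = 0 := by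
    rw [← hB.mulVec_apply_eq_add_s8 w (Fin.ne_of_val_ne (by omega)) fun l hl => ?_, hw,
      Pi.zero_apply]
    rw [SimpleGraph.pathGraph_adj] at hl
    rcases hl with hl | hl
    · exact Or.inr (Fin.ext (by simp [m] at hl; omega))
    · exact Or.inl (Fin.ext (by simp [m] at hl; omega))
  have hmi : B m i ≠ 0 := (hB m i).2 (SimpleGraph.pathGraph_adj.2 (Or.inr rfl))
  have hmj : B m j ≠ 0 := (hB m j).2 (SimpleGraph.pathGraph_adj.2 (Or.inl (by simp [m]; omega)))
  constructor
  · intro h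
    simpa [h, hmj] using hrow
  · intro h
    simpa [h, hmi] using hrow

theorem apply_one_eq_zero_of_mulVec_eq_zero (hB : B.HasPathSupport_s8) (hw : B *ᵥ w = 0)
    (h1 : 1 < n) : w ⟨1, h1⟩ = 0 := by
  have hrow : (B *ᵥ w) ⟨0, by omega⟩ = B ⟨0, by omega⟩ ⟨1, h1⟩ * w ⟨1, h1⟩ :=
    Fintype.sum_eq_single (⟨1, h1⟩ : Fin n) fun l hl => by
      show B ⟨0, by omega⟩ l * w l = 0
      rw [hB.apply_eq_zero fun hadj => hl (Fin.ext ?_), zero_mul]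
      rw [SimpleGraph.pathGraph_adj] at hadj
      simp only at hadj ⊢
      omega
  rw [hw, Pi.zero_apply] at hrow
  exact (mul_eq_zero.1 hrow.symm).resolve_left
    ((hB _ _).2 (SimpleGraph.pathGraph_adj.2 (Or.inl rfl)))

theorem apply_eq_zero_iff_apply_mod_two (hB : B.HasPathSupport_s8) (hw : B *ᵥ w = 0) :
    ∀ (i : ℕ) (hi : i < n), w ⟨i, hi⟩ = 0 ↔ w ⟨i % 2, by omega⟩ = 0
  | 0, _ | 1, _ => Iff.rfl
  | i + 2, hi => by
    rw [← hB.apply_eq_zero_iff_of_mulVec_eq_zero hw (i := ⟨i, by omega⟩) rfl,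
      hB.apply_eq_zero_iff_apply_mod_two hw i]
    simp only [Nat.add_mod_right]

theorem apply_eq_zero_iff_of_mod_two_eq (hB : B.HasPathSupport_s8) (hw : B *ᵥ w = 0)
    {i j : Fin n} (h : i.val % 2 = j.val % 2) : w i = 0 ↔ w j = 0 := by
  have hi := hB.apply_eq_zero_iff_apply_mod_two hw i i.2
  have hj := hB.apply_eq_zero_iff_apply_mod_two hw j j.2
  simp only [Fin.eta, h] at hi hj
  rw [hi, hj]

theorem eq_zero_of_mulVec_eq_zero (hB : B.HasPathSupport_s8) (hw : B *ᵥ w = 0) (hn : 0 < n)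
    (h0 : w ⟨0, hn⟩ = 0) : w = 0 := by
  funext i
  rcases Nat.mod_two_eq_zero_or_one i.val with hi | hi
  · exact (hB.apply_eq_zero_iff_of_mod_two_eq hw (j := ⟨0, hn⟩) hi).2 h0
  · exact (hB.apply_eq_zero_iff_of_mod_two_eq hw (j := ⟨1, by omega⟩) hi).2
      (hB.apply_one_eq_zero_of_mulVec_eq_zero hw _)

theorem support_eq_even_of_mulVec_eq_zero (hB : B.HasPathSupport_s8) (hw : B *ᵥ w = 0)
    (hw0 : w ≠ 0) : {i | w i ≠ 0} = {i : Fin n | i.val % 2 = 0} := by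
  ext i
  simp only [Set.mem_ofPred_eq]
  rcases Nat.mod_two_eq_zero_or_one i.val with hi | hi
  · have hn : 0 < n := by omega
    rw [ne_eq, hB.apply_eq_zero_iff_of_mod_two_eq hw (j := ⟨0, hn⟩) hi]
    exact iff_of_true (fun h0 => hw0 (hB.eq_zero_of_mulVec_eq_zero hw hn h0)) hi
  · rw [ne_eq, hB.apply_eq_zero_iff_of_mod_two_eq hw (j := ⟨1, by omega⟩) hi]
    exact iff_of_false (not_not.2 (hB.apply_one_eq_zero_of_mulVec_eq_zero hw _)) (by omega)

theorem exists_ker_toLin'_eq_span_singleton [NeZero (2 : K)] (hB : B.HasPathSupport_s8)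
    (hn : Odd n) : ∃ v : Fin n → K, v ≠ 0 ∧ LinearMap.ker (toLin' B) = Submodule.span K {v} ∧
      {i | v i ≠ 0} = {i : Fin n | i.val % 2 = 0} := by
  obtain ⟨v, hv0, hv⟩ := exists_mulVec_eq_zero_iff.2 (hB.det_eq_zero hn)
  refine ⟨v, hv0, le_antisymm (fun w hw => ?_) ?_, hB.support_eq_even_of_mulVec_eq_zero hv hv0⟩
  · rw [LinearMap.mem_ker, toLin'_apply] at hw
    let o : Fin n := ⟨0, hn.pos⟩
    have hvo : v o ≠ 0 := fun h => hv0 (hB.eq_zero_of_mulVec_eq_zero hv hn.pos h)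
    refine Submodule.mem_span_singleton.2 ⟨w o / v o, (sub_eq_zero.1 ?_).symm⟩
    refine hB.eq_zero_of_mulVec_eq_zero ?_ hn.pos ?_
    · rw [mulVec_sub, mulVec_smul, hw, hv, smul_zero, sub_zero]
    · simp [o, hvo]
  · rw [Submodule.span_le, Set.singleton_subset_iff, SetLike.mem_coe, LinearMap.mem_ker,
      toLin'_apply, hv]

end Matrix.HasPathSupport_s8

theorem hasPathSupport_bmat_cartanB (n : ℕ) (σ : Equiv.Perm (Fin n)) :
    (Bmat (cartanB n) σ).HasPathSupport_s8 := by
  intro i j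
  rw [SimpleGraph.pathGraph_adj]
  by_cases hij : i = j
  · subst hij
    simp [Bmat]
  · have hval : i.val ≠ j.val := Fin.val_ne_of_ne hij
    simp only [Bmat, cartanB, hij, if_false]
    split_ifs <;> norm_num <;> omega

theorem kernel_gen_support_typeB_general (k : ℕ) (σ : Equiv.Perm (Fin (2 * k + 1))) :
    ∃ v : Fin (2 * k + 1) → ℚ, v ≠ 0 ∧
      LinearMap.ker (Matrix.toLin' (Bmat (cartanB (2 * k + 1)) σ)) =
        Submodule.span ℚ {v} ∧
      {i : Fin (2 * k + 1) | v i ≠ 0} = {i : Fin (2 * k + 1) | i.val % 2 = 0} ∧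
      Nat.card
        ((SimpleGraph.pathGraph (2 * k + 1)).induce
          {i : Fin (2 * k + 1) | v i ≠ 0}).ConnectedComponent = k + 1 := by
  obtain ⟨v, hv0, hker, hsupp⟩ :=
    (hasPathSupport_bmat_cartanB _ σ).exists_ker_toLin'_eq_span_singleton (odd_two_mul_add_one k)
  refine ⟨v, hv0, hker, hsupp, ?_⟩
  rw [hsupp, SimpleGraph.pathGraph_induce_even_eq_bot, SimpleGraph.card_connectedComponent_bot,
    Fin.card_setOf_val_mod_two_eq_zero]

/-- In type `Bₙ` with `n = 2k+1` odd, `n ≥ 3`, the kernel of any acyclic exchange matrix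
`B_σ` is spanned by a single nonzero vector whose support is exactly the set of nodes with
even `0`-indexed index (i.e. the odd nodes `1, 3, …, n` in `1`-indexed notation); in
particular the support has exactly `k+1` connected components in the Dynkin diagram of
type `Bₙ` (the path graph on the `n` nodes). -/
theorem kernel_gen_support_typeB (k : ℕ) (hk : 1 ≤ k) (σ : Equiv.Perm (Fin (2 * k + 1))) :
    ∃ v : Fin (2 * k + 1) → ℚ, v ≠ 0 ∧
      LinearMap.ker (Matrix.toLin' (Bmat (cartanB (2 * k + 1)) σ)) =
        Submodule.span ℚ {v} ∧
      {i : Fin (2 * k + 1) | v i ≠ 0} = {i : Fin (2 * k + 1) | i.val % 2 = 0} ∧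
      Nat.card
        ((SimpleGraph.pathGraph (2 * k + 1)).induce
          {i : Fin (2 * k + 1) | v i ≠ 0}).ConnectedComponent = k + 1 :=
  kernel_gen_support_typeB_general k σ
end

section
/- Let n ≥ 5 be odd, let A be the Cartan matrix of type D_n, and let σ be any permutation of {1,…,n}. If σ(n−2) lies strictly between σ(n−1) and σ(n) (i.e., min{σ(n−1), σ(n)} < σ(n−2) < max{σ(n−1), σ(n)}), then the kernel of B_σ over ℚ is spanned by the vector e_{n−1} + e_n (corresponding to α_{n−1} + α_n); otherwise it is spanned by e_{n−1} − e_n (corresponding to α_{n−1} − α_n). Here e_i denotes the i-th standard basis vector of ℚⁿ. -/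
open Matrix

/-!
Write `c, p, q` for the vertices `n-3, n-2, n-1` of `Dₙ` and `x` for a vector in the kernel of
`B = B_σ`, whose nonzero entries are the `±1` at the edges of the Dynkin diagram. The row of a
leaf says that `x` vanishes at its neighbour, and the row of an interior vertex `k` of the path
`0 — 1 — ⋯ — c` says that `x (k-1) = 0 ↔ x (k+1) = 0`. Starting from the leaves `0` and `p`, this
kills `x` at all odd vertices of the path and, because `c = n - 3` is even, at all even ones.
What is left is the row of `c`, `B c p * x p + B c q * x q = 0`, so the kernel is the line through
`B c q • e p - B c p • e q`, that is through `e p + e q` or `e p - e q` according as `B c p` and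
`B c q` have opposite or equal signs, i.e. as `σ c` does or does not lie between `σ p` and `σ q`.
-/

theorem forall_le_of_iff_add_two {P : ℕ → Prop} {m : ℕ} (hm : Even m) (h1 : P 1) (hm' : P m)
    (step : ∀ k, k + 2 ≤ m → (P k ↔ P (k + 2))) : ∀ k ≤ m, P k := by
  have chain : ∀ j k, k + 2 * j ≤ m → (P k ↔ P (k + 2 * j)) := by
    intro j
    induction j with
    | zero => simp
    | succ j ih =>
      intro k hk
      rw [ih k (by omega), step _ (by omega), show k + 2 * j + 2 = k + 2 * (j + 1) by ring]
  intro k hk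
  obtain ⟨t, rfl⟩ := hm
  rcases Nat.even_or_odd' k with ⟨j, rfl | rfl⟩
  · exact (chain (t - j) (2 * j) (by omega)).2 (by rwa [show 2 * j + 2 * (t - j) = t + t by omega])
  · rw [add_comm]
    exact (chain j 1 (by omega)).1 h1

theorem min_lt_and_lt_max_iff {α : Type*} [LinearOrder α] {x y z : α} (hy : x ≠ y) (hz : x ≠ z) :
    min y z < x ∧ x < max y z ↔ (x < y ↔ ¬x < z) := by
  grind

section RowLemmas

variable {ι R : Type*} [Fintype ι] [Semiring R] {M : Matrix ι ι R} {x : ι → R}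

theorem Matrix.mulVec_apply_eq_add {i j k : ι} (hjk : j ≠ k)
    (h : ∀ l, l ≠ j → l ≠ k → M i l * x l = 0) :
    (M *ᵥ x) i = M i j * x j + M i k * x k :=
  Fintype.sum_eq_add j k hjk fun l hl => h l hl.1 hl.2

variable [NoZeroDivisors R]

theorem Matrix.apply_eq_zero_of_mulVec_eq_zero_of_row_single (hx : M *ᵥ x = 0) {i j : ι}
    (hrow : ∀ l, l ≠ j → M i l = 0) (hij : M i j ≠ 0) : x j = 0 := by
  have hi : (M *ᵥ x) i = M i j * x j :=
    Fintype.sum_eq_single j fun l hl => by simp [hrow l hl]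
  rw [hx, Pi.zero_apply, eq_comm, mul_eq_zero] at hi
  exact hi.resolve_left hij

theorem Matrix.apply_eq_zero_iff_of_mulVec_eq_zero_of_row_pair (hx : M *ᵥ x = 0) {i j k : ι}
    (hjk : j ≠ k) (hrow : ∀ l, l ≠ j → l ≠ k → M i l = 0) (hj : M i j ≠ 0) (hk : M i k ≠ 0) :
    x j = 0 ↔ x k = 0 := by
  have hi : (M *ᵥ x) i = M i j * x j + M i k * x k :=
    mulVec_apply_eq_add hjk fun l hl hl' => by simp [hrow l hl hl']
  rw [hx, Pi.zero_apply] at hi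
  constructor <;> intro h0
  · simpa [h0, hk] using hi.symm
  · simpa [h0, hj] using hi.symm

end RowLemmas

theorem mem_span_smul_single_sub_smul_single {K ι : Type*} [Field K] [DecidableEq ι] {p q : ι}
    (hpq : p ≠ q) {a b : K} (hb : b ≠ 0) {x : ι → K} (hx : ∀ i, i ≠ p → i ≠ q → x i = 0)
    (hab : a * x p + b * x q = 0) :
    x ∈ K ∙ (b • Pi.single p 1 - a • Pi.single q 1) := by
  refine Submodule.mem_span_singleton.2 ⟨x p / b, funext fun i => ?_⟩
  by_cases hip : i = p
  · subst hip
    simp [hpq, hb]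
  by_cases hiq : i = q
  · subst hiq
    simp only [Pi.smul_apply, Pi.sub_apply, Pi.single_eq_same, Pi.single_eq_of_ne' hpq,
      smul_eq_mul, mul_zero, mul_one, zero_sub]
    rw [div_mul_eq_mul_div, div_eq_iff hb]
    linear_combination -hab
  · simp [hip, hiq, hx i hip hiq]

def dynkinDAdj (n a b : ℕ) : Prop :=
  (a + 1 = b ∧ b ≤ n - 2) ∨ (b + 1 = a ∧ a ≤ n - 2) ∨ (a = n - 3 ∧ b = n - 1) ∨
    (a = n - 1 ∧ b = n - 3)

section TypeD

variable {n : ℕ} (σ : Equiv.Perm (Fin n))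

theorem Bmat_cartanD_apply_eq_zero {i j : Fin n} (h : ¬dynkinDAdj n i j) :
    Bmat (cartanD n) σ i j = 0 := by
  unfold dynkinDAdj at h
  simp only [Bmat, cartanD, if_neg h]
  split_ifs <;> simp

theorem Bmat_cartanD_apply_of_adj {i j : Fin n} (hij : i ≠ j) (h : dynkinDAdj n i j) :
    Bmat (cartanD n) σ i j = if σ i < σ j then 1 else -1 := by
  unfold dynkinDAdj at h
  simp only [Bmat, cartanD, if_neg hij, if_pos h, neg_neg]

theorem Bmat_cartanD_apply_ne_zero {i j : Fin n} (hij : i ≠ j) (h : dynkinDAdj n i j) :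
    Bmat (cartanD n) σ i j ≠ 0 := by
  rw [Bmat_cartanD_apply_of_adj σ hij h]
  split_ifs <;> norm_num

theorem apply_eq_zero_of_Bmat_cartanD_mulVec_eq_zero (hn : 5 ≤ n) (hodd : Odd n)
    {x : Fin n → ℚ} (hx : Bmat (cartanD n) σ *ᵥ x = 0) (i : Fin n) (hi : i.val ≤ n - 3) :
    x i = 0 := by
  suffices h : ∀ k ≤ n - 3, ∀ hk : k < n, x ⟨k, hk⟩ = 0 from h i hi i.isLt
  have heven : Even (n - 3) := by
    obtain ⟨t, rfl⟩ := hodd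
    exact ⟨t - 1, by omega⟩
  refine forall_le_of_iff_add_two heven (fun _ => ?leaf) (fun _ => ?fork) fun m hm => ?path
  case leaf =>
    refine apply_eq_zero_of_mulVec_eq_zero_of_row_single hx (i := ⟨0, by omega⟩)
      (fun l hl => Bmat_cartanD_apply_eq_zero σ ?_) (Bmat_cartanD_apply_ne_zero σ ?_ ?_) <;>
    simp only [dynkinDAdj, ne_eq, Fin.ext_iff, true_and] at * <;> omega
  case fork =>
    refine apply_eq_zero_of_mulVec_eq_zero_of_row_single hx (i := ⟨n - 2, by omega⟩)
      (fun l hl => Bmat_cartanD_apply_eq_zero σ ?_) (Bmat_cartanD_apply_ne_zero σ ?_ ?_) <;>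
    simp only [dynkinDAdj, ne_eq, Fin.ext_iff] at * <;> omega
  case path =>
    have h := apply_eq_zero_iff_of_mulVec_eq_zero_of_row_pair hx (i := ⟨m + 1, by omega⟩)
      (j := ⟨m, by omega⟩) (k := ⟨m + 2, by omega⟩) ?_
      (fun l hl hl' => Bmat_cartanD_apply_eq_zero σ ?_) (Bmat_cartanD_apply_ne_zero σ ?_ ?_)
      (Bmat_cartanD_apply_ne_zero σ ?_ ?_)
    · exact ⟨fun h0 _ => h.1 (h0 _), fun h2 _ => h.2 (h2 _)⟩
    all_goals simp only [dynkinDAdj, ne_eq, Fin.ext_iff, true_and] at *; omega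

theorem ker_Bmat_cartanD (hn : 5 ≤ n) (hodd : Odd n) {c p q : Fin n} (hc : c.val = n - 3)
    (hp : p.val = n - 2) (hq : q.val = n - 1) :
    LinearMap.ker (toLin' (Bmat (cartanD n) σ)) =
      ℚ ∙ (Bmat (cartanD n) σ c q • Pi.single p 1 - Bmat (cartanD n) σ c p • Pi.single q 1) := by
  have hpq : p ≠ q := by rw [Ne, Fin.ext_iff]; omega
  apply le_antisymm
  · intro x hx
    rw [LinearMap.mem_ker, toLin'_apply] at hx
    have hvanish : ∀ i, i ≠ p → i ≠ q → x i = 0 := fun i hip hiq =>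
      apply_eq_zero_of_Bmat_cartanD_mulVec_eq_zero σ hn hodd hx i (by
        rw [Ne, Fin.ext_iff] at hip hiq; omega)
    have hrow : Bmat (cartanD n) σ c p * x p + Bmat (cartanD n) σ c q * x q = 0 := by
      rw [← mulVec_apply_eq_add hpq fun l hlp hlq => by rw [hvanish l hlp hlq, mul_zero], hx,
        Pi.zero_apply]
    exact mem_span_smul_single_sub_smul_single hpq
      (Bmat_cartanD_apply_ne_zero σ (by rw [Ne, Fin.ext_iff]; omega)
        (by simp only [dynkinDAdj]; omega)) hvanish hrow
  · rw [Submodule.span_le, Set.singleton_subset_iff, SetLike.mem_coe, LinearMap.mem_ker,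
      toLin'_apply, mulVec_sub, mulVec_smul, mulVec_smul, mulVec_single_one, mulVec_single_one]
    funext i
    simp only [Pi.sub_apply, Pi.smul_apply, col_apply, smul_eq_mul, Pi.zero_apply]
    by_cases hic : i = c
    · rw [hic, sub_eq_zero, mul_comm]
    · rw [Fin.ext_iff] at hic
      rw [Bmat_cartanD_apply_eq_zero σ (i := i) (j := p),
        Bmat_cartanD_apply_eq_zero σ (i := i) (j := q), mul_zero, mul_zero, sub_zero] <;>
      simp only [dynkinDAdj] <;> omega

end TypeD

/-- In type `Dₙ` with `n ≥ 5` odd, the kernel of any acyclic exchange matrix `B_σ` is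
spanned by `e_{n-2} + e_{n-1}` (in `0`-indexed notation, i.e. `α_{n-1} + α_n`) when the
branching node `n-3` appears strictly between the two fork nodes `n-2` and `n-1` in the
order given by `σ`, and by `e_{n-2} - e_{n-1}` (i.e. `α_{n-1} - α_n`) otherwise. -/
theorem kernel_gen_typeD_odd (n : ℕ) (hn : 5 ≤ n) (hodd : Odd n)
    (σ : Equiv.Perm (Fin n)) :
    LinearMap.ker (Matrix.toLin' (Bmat (cartanD n) σ)) =
      Submodule.span ℚ
        {if min (σ ⟨n - 2, by omega⟩) (σ ⟨n - 1, by omega⟩) < σ ⟨n - 3, by omega⟩ ∧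
            σ ⟨n - 3, by omega⟩ < max (σ ⟨n - 2, by omega⟩) (σ ⟨n - 1, by omega⟩) then
          Pi.single (⟨n - 2, by omega⟩ : Fin n) (1 : ℚ) +
            Pi.single (⟨n - 1, by omega⟩ : Fin n) (1 : ℚ)
        else
          Pi.single (⟨n - 2, by omega⟩ : Fin n) (1 : ℚ) -
            Pi.single (⟨n - 1, by omega⟩ : Fin n) (1 : ℚ)} := by
  generalize hc : (⟨n - 3, by omega⟩ : Fin n) = c
  generalize hp : (⟨n - 2, by omega⟩ : Fin n) = p
  generalize hq : (⟨n - 1, by omega⟩ : Fin n) = q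
  replace hc : c.val = n - 3 := hc ▸ rfl
  replace hp : p.val = n - 2 := hp ▸ rfl
  replace hq : q.val = n - 1 := hq ▸ rfl
  have hcp : c ≠ p := by rw [Ne, Fin.ext_iff]; omega
  have hcq : c ≠ q := by rw [Ne, Fin.ext_iff]; omega
  have hBcp := Bmat_cartanD_apply_of_adj σ hcp (by simp only [dynkinDAdj]; omega)
  have hBcq := Bmat_cartanD_apply_of_adj σ hcq (by simp only [dynkinDAdj]; omega)
  have hsign : Bmat (cartanD n) σ c p = if min (σ p) (σ q) < σ c ∧ σ c < max (σ p) (σ q)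
      then -Bmat (cartanD n) σ c q else Bmat (cartanD n) σ c q := by
    simp only [min_lt_and_lt_max_iff (σ.injective.ne hcp) (σ.injective.ne hcq), hBcp, hBcq]
    split_ifs <;> simp_all
  have hunit : IsUnit (Bmat (cartanD n) σ c q) := by rw [hBcq]; split_ifs <;> simp
  rw [ker_Bmat_cartanD σ hn hodd hc hp hq, hsign]
  conv_rhs => rw [← Submodule.span_singleton_smul_eq hunit]
  split_ifs <;> congr 2 <;> module
end

section
/- Let n ≥ 2 and let α and β be any two positive roots of type B_n, written in simple-root coordinates. Then the support {i : α_i − β_i ≠ 0} of their difference α − β is a disjoint union of at most two sets of consecutive integers; equivalently, it has at most two connected components in the Dynkin diagram of type B_n (a path on {1,…,n}). -/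
/-!
Each positive root, read as a function of the index, vanishes to the left and is a step
function with at most two jumps (for the first kind at `a` and `b + 1`, for the second at `a`
and `b`). Hence `α - β` vanishes left of its first jump and has at most four jumps. Sorting
the jumps, `α - β` is constant on each of two adjacent pieces between the first and the third
jump, and likewise from the third jump on; the support meets each such pair of adjacent
pieces in an interval.
-/

/-- The positive roots of type `Bₙ` in simple-root coordinates (nodes `0`-indexed, the
short simple root being the last node): either `1` on an interval `[a, b]` and `0`
elsewhere, or `1` on `[a, b-1]`, `2` on `[b, n-1]` and `0` elsewhere (with `a < b`). -/
def IsPosRootB (n : ℕ) (v : Fin n → ℤ) : Prop :=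
  (∃ a b : ℕ, a ≤ b ∧ b < n ∧
    v = fun i => if a ≤ i.val ∧ i.val ≤ b then 1 else 0) ∨
  (∃ a b : ℕ, a < b ∧ b < n ∧
    v = fun i => if b ≤ i.val then 2 else if a ≤ i.val then 1 else 0)

/-- A (possibly empty) set of consecutive indices in `Fin n`. -/
def IsIntervalSet (n : ℕ) (S : Set (Fin n)) : Prop :=
  ∃ a b : ℕ, S = {i : Fin n | a ≤ i.val ∧ i.val ≤ b}

lemma isIntervalSet_Ico (n l r : ℕ) : IsIntervalSet n {i : Fin n | l ≤ i.val ∧ i.val < r} := by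
  rcases r with _ | r
  · exact ⟨1, 0, by ext i; simp only [Set.mem_ofPred_eq]; omega⟩
  · exact ⟨l, r, by ext i; simp only [Set.mem_ofPred_eq]; omega⟩

section Pieces

variable {n : ℕ} {M : Type*} [Zero M]

lemma isIntervalSet_support_of_two_pieces (f : Fin n → M) (a b c : ℕ) (x y : M)
    (hx : ∀ i : Fin n, a ≤ i.val → i.val < b → f i = x)
    (hy : ∀ i : Fin n, b ≤ i.val → i.val < c → f i = y) :
    IsIntervalSet n {i : Fin n | a ≤ i.val ∧ i.val < c ∧ f i ≠ 0} := by
  suffices ∃ l r : ℕ, ∀ i : Fin n, a ≤ i.val → i.val < c →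
      (f i ≠ 0 ↔ l ≤ i.val ∧ i.val < r) by
    obtain ⟨l, r, h⟩ := this
    convert isIntervalSet_Ico n (max a l) (min c r) using 1
    ext i
    have := h i
    simp only [Set.mem_ofPred_eq]
    grind
  classical
  refine ⟨if x = 0 then b else a, if y = 0 then b else c, fun i ha hc => ?_⟩
  have hfi : f i = if i.val < b then x else y := by
    split_ifs with hb
    exacts [hx i ha hb, hy i (not_lt.1 hb) hc]
  rw [hfi]
  split_ifs <;> grind

theorem exists_two_intervals_support_of_four_pieces (f : Fin n → M) (a b c d : ℕ)
    (x₁ x₂ x₃ x₄ : M) (h₀ : ∀ i : Fin n, i.val < a → f i = 0)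
    (h₁ : ∀ i : Fin n, a ≤ i.val → i.val < b → f i = x₁)
    (h₂ : ∀ i : Fin n, b ≤ i.val → i.val < c → f i = x₂)
    (h₃ : ∀ i : Fin n, c ≤ i.val → i.val < d → f i = x₃)
    (h₄ : ∀ i : Fin n, d ≤ i.val → i.val < n → f i = x₄) :
    ∃ S T : Set (Fin n), IsIntervalSet n S ∧ IsIntervalSet n T ∧ Disjoint S T ∧
      {i : Fin n | f i ≠ 0} = S ∪ T := by
  refine ⟨_, _, isIntervalSet_support_of_two_pieces f a b c x₁ x₂ h₁ h₂,
    isIntervalSet_support_of_two_pieces f c d n x₃ x₄ h₃ h₄, ?_, ?_⟩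
  · rw [Set.disjoint_left]
    rintro i ⟨-, hic, -⟩ ⟨hci, -, -⟩
    omega
  · ext i
    simp only [Set.mem_ofPred_eq, Set.mem_union]
    constructor
    · intro hf
      by_cases hic : i.val < c
      · exact Or.inl ⟨not_lt.1 fun hia => hf (h₀ i hia), hic, hf⟩
      · exact Or.inr ⟨not_lt.1 hic, i.isLt, hf⟩
    · rintro (⟨-, -, hf⟩ | ⟨-, -, hf⟩) <;> exact hf

end Pieces

section StepSum

variable {m : ℕ} {M : Type*} [AddCommMonoid M]

def stepSum (t : Fin m → ℕ) (e : Fin m → M) (i : ℕ) : M :=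
  ∑ k, if t k ≤ i then e k else 0

lemma stepSum_comp_perm (t : Fin m → ℕ) (e : Fin m → M) (σ : Equiv.Perm (Fin m)) :
    stepSum (t ∘ σ) (e ∘ σ) = stepSum t e :=
  funext fun i => Equiv.sum_comp σ fun k => if t k ≤ i then e k else 0

lemma exists_monotone_stepSum_eq (t : Fin m → ℕ) (e : Fin m → M) :
    ∃ s : Fin m → ℕ, ∃ d : Fin m → M, Monotone s ∧ stepSum s d = stepSum t e :=
  ⟨_, _, Tuple.monotone_sort t, stepSum_comp_perm t e (Tuple.sort t)⟩

theorem exists_two_intervals_support_stepSum {n : ℕ} (t : Fin 4 → ℕ) (e : Fin 4 → M)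
    (f : Fin n → M) (hf : ∀ i, f i = stepSum t e i.val) :
    ∃ S T : Set (Fin n), IsIntervalSet n S ∧ IsIntervalSet n T ∧ Disjoint S T ∧
      {i : Fin n | f i ≠ 0} = S ∪ T := by
  obtain ⟨s, d, hs, hsd⟩ := exists_monotone_stepSum_eq t e
  have h01 : s 0 ≤ s 1 := hs (by decide)
  have h12 : s 1 ≤ s 2 := hs (by decide)
  have h23 : s 2 ≤ s 3 := hs (by decide)
  have hfs : ∀ i, f i = (if s 0 ≤ i.val then d 0 else 0) + (if s 1 ≤ i.val then d 1 else 0) +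
      (if s 2 ≤ i.val then d 2 else 0) + (if s 3 ≤ i.val then d 3 else 0) := fun i => by
    rw [hf, ← hsd, stepSum, Fin.sum_univ_four]
  apply exists_two_intervals_support_of_four_pieces f (s 0) (s 1) (s 2) (s 3)
    (d 0) (d 0 + d 1) (d 0 + d 1 + d 2) (d 0 + d 1 + d 2 + d 3) <;>
  · intro i
    rw [hfs i]
    split_ifs <;> first | omega | simp

end StepSum

lemma IsPosRootB.exists_eq_add_steps {n : ℕ} {v : Fin n → ℤ} (h : IsPosRootB n v) :
    ∃ t u : ℕ, ∃ e d : ℤ, ∀ i : Fin n,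
      v i = (if t ≤ i.val then e else 0) + (if u ≤ i.val then d else 0) := by
  rcases h with ⟨a, b, hab, -, rfl⟩ | ⟨a, b, hab, -, rfl⟩
  · exact ⟨a, b + 1, 1, -1, fun i => by dsimp only; split_ifs <;> omega⟩
  · exact ⟨a, b, 1, 1, fun i => by dsimp only; split_ifs <;> omega⟩

theorem support_diff_posRoots_typeB_general (n : ℕ) (α β : Fin n → ℤ)
    (hα : IsPosRootB n α) (hβ : IsPosRootB n β) :
    ∃ S T : Set (Fin n), IsIntervalSet n S ∧ IsIntervalSet n T ∧ Disjoint S T ∧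
      {i : Fin n | α i - β i ≠ 0} = S ∪ T := by
  obtain ⟨t, u, e, d, hα⟩ := hα.exists_eq_add_steps
  obtain ⟨t', u', e', d', hβ⟩ := hβ.exists_eq_add_steps
  refine exists_two_intervals_support_stepSum ![t, u, t', u'] ![e, d, -e', -d']
    (fun i => α i - β i) fun i => ?_
  simp only [stepSum, Fin.sum_univ_four, hα, hβ, Matrix.cons_val]
  -- the `Decidable` instances still mention `![…]`, so `split_ifs` leaves the right side unreduced
  split_ifs <;> simp only [if_pos, if_neg, *, not_false_eq_true] <;> ring

/-- The support of the difference of two positive roots of type `Bₙ` is a disjoint union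
of at most two sets of consecutive integers (equivalently, it has at most two connected
components in the Dynkin diagram of type `Bₙ`, a path). -/
theorem support_diff_posRoots_typeB (n : ℕ) (hn : 2 ≤ n) (α β : Fin n → ℤ)
    (hα : IsPosRootB n α) (hβ : IsPosRootB n β) :
    ∃ S T : Set (Fin n), IsIntervalSet n S ∧ IsIntervalSet n T ∧ Disjoint S T ∧
      {i : Fin n | α i - β i ≠ 0} = S ∪ T :=
  support_diff_posRoots_typeB_general n α β hα hβ
end

section
/- Let n ≥ 2 and let α and β be any two positive roots of type C_n, written in simple-root coordinates. Then the support {i : α_i − β_i ≠ 0} of their difference α − β is a disjoint union of at most two sets of consecutive integers; equivalently, it has at most two connected components in the Dynkin diagram of type C_n (a path on {1,…,n}). -/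
/-!
A subset `X` of a linear order splits into two disjoint order-connected pieces as soon as
there are no `x₁ < x₂ < x₃ < x₄ < x₅` with `x₁, x₃, x₅ ∈ X` and `x₂, x₄ ∉ X`: the points of `X`
preceded by a gap of `X` form one piece, the remaining points the other. A positive root of
type `Cₙ` is constant on at most four consecutive ranges of nodes, so for two positive roots the
absence of three runs in the support of `α - β` is a matter of linear arithmetic on their
coordinates.
-/

/-- The positive roots of type `Cₙ` in simple-root coordinates (nodes `0`-indexed, the
long simple root being the last node): either `1` on an interval `[a, b]` and `0`
elsewhere, or `1` on `[a, b-1]`, `2` on `[b, n-2]`, `1` at `n-1` and `0` elsewhere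
(with `a ≤ b ≤ n-2`). -/
def IsPosRootC (n : ℕ) (v : Fin n → ℤ) : Prop :=
  (∃ a b : ℕ, a ≤ b ∧ b < n ∧
    v = fun i => if a ≤ i.val ∧ i.val ≤ b then 1 else 0) ∨
  (∃ a b : ℕ, a ≤ b ∧ b ≤ n - 2 ∧
    v = fun i => if i.val = n - 1 then 1
      else if b ≤ i.val then 2 else if a ≤ i.val then 1 else 0)

namespace Set

variable {α : Type*} [LinearOrder α]

def HasThreeRuns (X : Set α) : Prop :=
  ∃ x₁ x₂ x₃ x₄ x₅, x₁ < x₂ ∧ x₂ < x₃ ∧ x₃ < x₄ ∧ x₄ < x₅ ∧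
    x₁ ∈ X ∧ x₂ ∉ X ∧ x₃ ∈ X ∧ x₄ ∉ X ∧ x₅ ∈ X

theorem exists_ordConnected_disjoint_union_of_not_hasThreeRuns {X : Set α}
    (hX : ¬ X.HasThreeRuns) :
    ∃ S T : Set α, S.OrdConnected ∧ T.OrdConnected ∧ Disjoint S T ∧ X = S ∪ T := by
  set T := {x ∈ X | ∃ w ∈ X, ∃ g ∉ X, w < g ∧ g < x}
  have hTX : T ⊆ X := fun x hx => hx.1
  refine ⟨X \ T, T, ⟨fun x hx z hz y hy => ?_⟩, ⟨fun x hx z hz y hy => ?_⟩,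
    disjoint_sdiff_left, (sdiff_union_of_subset hTX).symm⟩
  · have hyX : y ∈ X := by
      by_contra hyX
      exact hz.2 ⟨hz.1, x, hx.1, y, hyX, hy.1.lt_of_ne (ne_of_mem_of_not_mem hx.1 hyX),
        hy.2.lt_of_ne (ne_of_mem_of_not_mem hz.1 hyX).symm⟩
    exact ⟨hyX, fun ⟨_, w, hw, g, hg, hwg, hgy⟩ =>
      hz.2 ⟨hz.1, w, hw, g, hg, hwg, hgy.trans_le hy.2⟩⟩
  · obtain ⟨hxX, w, hw, g, hg, hwg, hgx⟩ := hx
    have hyX : y ∈ X := by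
      by_contra hyX
      exact hX ⟨w, g, x, y, z, hwg, hgx, hy.1.lt_of_ne (ne_of_mem_of_not_mem hxX hyX),
        hy.2.lt_of_ne (ne_of_mem_of_not_mem hz.1 hyX).symm, hw, hg, hxX, hyX, hz.1⟩
    exact ⟨hyX, w, hw, g, hg, hwg, hgx.trans_le hy.1⟩

theorem OrdConnected.isIntervalSet {n : ℕ} {S : Set (Fin n)} (hS : S.OrdConnected) :
    IsIntervalSet n S := by
  rcases S.eq_empty_or_nonempty with rfl | hne
  · refine ⟨1, 0, ext fun i => ?_⟩
    simp only [mem_empty_iff_false, mem_ofPred_eq, false_iff]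
    omega
  obtain ⟨a, ha, ha_le⟩ := S.exists_min_image Fin.val S.toFinite hne
  obtain ⟨b, hb, le_b⟩ := S.exists_max_image Fin.val S.toFinite hne
  exact ⟨a, b, ext fun i => ⟨fun hi => ⟨ha_le i hi, le_b i hi⟩, fun hi => hS.out ha hb hi⟩⟩

end Set

namespace IsPosRootC

theorem exists_coords {n : ℕ} {v : Fin n → ℤ} (hv : IsPosRootC n v) :
    ∃ a b : ℕ, a ≤ b ∧
      ((∀ i : Fin n, (a ≤ i.val ∧ i.val ≤ b ∧ v i = 1) ∨
          ((i.val < a ∨ b < i.val) ∧ v i = 0)) ∨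
        (b ≤ n - 2 ∧ ∀ i : Fin n, (i.val = n - 1 ∧ v i = 1) ∨
          (b ≤ i.val ∧ i.val < n - 1 ∧ v i = 2) ∨ (a ≤ i.val ∧ i.val < b ∧ v i = 1) ∨
          (i.val < a ∧ v i = 0))) := by
  rcases hv with ⟨a, b, hab, -, rfl⟩ | ⟨a, b, hab, hb, rfl⟩
  · exact ⟨a, b, hab, .inl fun i => by dsimp only; split_ifs <;> omega⟩
  · refine ⟨a, b, hab, .inr ⟨hb, fun i => ?_⟩⟩
    have := i.isLt
    dsimp only
    split_ifs <;> omega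

theorem not_hasThreeRuns_ne {n : ℕ} {α β : Fin n → ℤ} (hα : IsPosRootC n α)
    (hβ : IsPosRootC n β) : ¬ {i | α i ≠ β i}.HasThreeRuns := by
  rintro ⟨x₁, x₂, x₃, x₄, x₅, h₁₂, h₂₃, h₃₄, h₄₅, h₁, h₂, h₃, h₄, h₅⟩
  simp only [Set.mem_ofPred_eq, not_not] at h₁ h₂ h₃ h₄ h₅
  rw [Fin.lt_def] at h₁₂ h₂₃ h₃₄ h₄₅
  have := x₅.isLt
  obtain ⟨a, b, hab, hα | ⟨hb, hα⟩⟩ := hα.exists_coords <;>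
  obtain ⟨c, d, hcd, hβ | ⟨hd, hβ⟩⟩ := hβ.exists_coords <;>
  · have := hα x₁; have := hα x₂; have := hα x₃; have := hα x₄; have := hα x₅
    have := hβ x₁; have := hβ x₂; have := hβ x₃; have := hβ x₄; have := hβ x₅
    omega

end IsPosRootC

theorem support_diff_posRoots_typeC_general (n : ℕ) (α β : Fin n → ℤ)
    (hα : IsPosRootC n α) (hβ : IsPosRootC n β) :
    ∃ S T : Set (Fin n), IsIntervalSet n S ∧ IsIntervalSet n T ∧ Disjoint S T ∧
      {i : Fin n | α i - β i ≠ 0} = S ∪ T := by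
  obtain ⟨S, T, hS, hT, hST, hsupp⟩ :=
    Set.exists_ordConnected_disjoint_union_of_not_hasThreeRuns (hα.not_hasThreeRuns_ne hβ)
  refine ⟨S, T, hS.isIntervalSet, hT.isIntervalSet, hST, ?_⟩
  simpa only [sub_ne_zero] using hsupp

/-- The support of the difference of two positive roots of type `Cₙ` is a disjoint union
of at most two sets of consecutive integers (equivalently, it has at most two connected
components in the Dynkin diagram of type `Cₙ`, a path). -/
theorem support_diff_posRoots_typeC (n : ℕ) (hn : 2 ≤ n) (α β : Fin n → ℤ)
    (hα : IsPosRootC n α) (hβ : IsPosRootC n β) :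
    ∃ S T : Set (Fin n), IsIntervalSet n S ∧ IsIntervalSet n T ∧ Disjoint S T ∧
      {i : Fin n | α i - β i ≠ 0} = S ∪ T :=
  support_diff_posRoots_typeC_general n α β hα hβ
end
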